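/- arXiv:2311.17556 — 13 statements merged into one kernel-verified Lean document; each statement's English description precedes it below -/
import Mathlib

section
/- Let A be a square complex matrix and let X and Z be two {1}-inverses of A (A*X*A = A and A*Z*A = A). Then X*A*Z = Z*A*X if and only if both X*A = Z*A and A*Z = A*X hold. -/
open Matrix

theorem stmt_6 {n : ℕ} (A X Z : Matrix (Fin n) (Fin n) ℂ)
    (hX : A * X * A = A) (hZ : A * Z * A = A) :
    X * A * Z = Z * A * X ↔ (X * A = Z * A ∧ A * Z = A * X) := by
  have hX' : A * (X * A) = A := by rw [← mul_assoc]; exact hX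
  have hZ' : A * (Z * A) = A := by rw [← mul_assoc]; exact hZ
  constructor
  · intro h
    constructor
    · have := congrArg (· * A) h
      simpa [mul_assoc, hX', hZ'] using this
    · have := congrArg (A * ·) h
      simpa [← mul_assoc, hX, hZ] using this
  · rintro ⟨h1, h2⟩
    calc X * A * Z = X * (A * Z) := by rw [mul_assoc]
    _ = X * (A * X) := by rw [h2]
    _ = X * A * X := by rw [mul_assoc]
    _ = Z * A * X := by rw [h1]
end

section
/- Let A be a square complex matrix and X a matrix satisfying X*A^{k+1} = A^k and A*X^2 = X for some positive integer k. Then X is an outer inverse of A, i.e., X*A*X = X. -/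
open Matrix

theorem stmt_8 {n : ℕ} (A X : Matrix (Fin n) (Fin n) ℂ) (k : ℕ) (hk : 0 < k)
    (h1 : X * A ^ (k + 1) = A ^ k) (h2 : A * X ^ 2 = X) :
    X * A * X = X := by
  have l1 : ∀ m : ℕ, A ^ m * X ^ (m + 1) = X := by
    intro m
    induction m with
    | zero => simp
    | succ m ih =>
      calc A ^ (m + 1) * X ^ (m + 2)
          = A ^ m * (A * X ^ 2) * X ^ m := by
            have hX : X ^ (m + 2) = X ^ 2 * X ^ m := by
              rw [show m + 2 = 2 + m by ring, pow_add]
            rw [pow_succ, hX]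
            simp only [mul_assoc]
        _ = A ^ m * X ^ (m + 1) := by rw [h2, pow_succ', mul_assoc]
        _ = X := ih
  have l2 : ∀ m : ℕ, X * A ^ (m + 1) * X ^ (m + 1) = X * A * X := by
    intro m
    induction m with
    | zero => simp
    | succ m ih =>
      calc X * A ^ (m + 2) * X ^ (m + 2)
          = X * A ^ (m + 1) * (A * X ^ 2) * X ^ m := by
            have hX : X ^ (m + 2) = X ^ 2 * X ^ m := by
              rw [show m + 2 = 2 + m by ring, pow_add]
            rw [pow_succ A (m + 1), hX]
            simp only [mul_assoc]
        _ = X * A ^ (m + 1) * X ^ (m + 1) := by rw [h2, mul_assoc, ← pow_succ']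
        _ = X * A * X := ih
  have : X * A * X = X * A ^ (k + 1) * X ^ (k + 1) := (l2 k).symm
  rw [this, h1, l1]
end

section
/- Let A be a square complex matrix with Moore-Penrose inverse M and Drazin inverse D of index k. The DMP inverse D*A*M is the unique matrix Z satisfying the three equations: Z*A*Z = Z, A*Z = A*D*A*M, and Z*A = D*A. -/
open Matrix

theorem stmt_9 {n : ℕ} (A M D : Matrix (Fin n) (Fin n) ℂ) (k : ℕ) (hk : 0 < k)
    (hM1 : A * M * A = A) (hM2 : M * A * M = M)
    (hM3 : (A * M)ᴴ = A * M) (hM4 : (M * A)ᴴ = M * A)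
    (hD1 : D * A ^ (k + 1) = A ^ k) (hD2 : D * A * D = D) (hD3 : A * D = D * A) :
    ((D * A * M) * A * (D * A * M) = D * A * M ∧
      A * (D * A * M) = A * D * A * M ∧
      (D * A * M) * A = D * A) ∧
    ∀ Z : Matrix (Fin n) (Fin n) ℂ,
      (Z * A * Z = Z ∧ A * Z = A * D * A * M ∧ Z * A = D * A) → Z = D * A * M := by
  have hDAM_A : D * A * M * A = D * A := by
    calc D * A * M * A = D * (A * M * A) := by noncomm_ring
    _ = D * A := by rw [hM1]
  constructor
  · refine ⟨?_, by noncomm_ring, hDAM_A⟩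
    calc D * A * M * A * (D * A * M) = (D * A * M * A) * D * A * M := by noncomm_ring
    _ = (D * A * D) * A * M := by rw [hDAM_A]
    _ = D * A * M := by rw [hD2]
  · rintro Z ⟨h1, h2, h3⟩
    calc Z = Z * A * Z := h1.symm
    _ = D * (A * Z) := by rw [h3]; noncomm_ring
    _ = D * (A * D * A * M) := by rw [h2]
    _ = (D * A * D) * A * M := by noncomm_ring
    _ = D * A * M := by rw [hD2]
end

section
/- Let A be a square complex matrix with Moore-Penrose inverse M and Drazin inverse D of index k. The MPD inverse M*A*D is the unique matrix Z satisfying the three equations: Z*A*Z = Z, Z*A = M*A*D*A, and A*Z = A*D. -/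
open Matrix

theorem stmt_10 {n : ℕ} (A M D : Matrix (Fin n) (Fin n) ℂ) (k : ℕ) (hk : 0 < k)
    (hM1 : A * M * A = A) (hM2 : M * A * M = M)
    (hM3 : (A * M)ᴴ = A * M) (hM4 : (M * A)ᴴ = M * A)
    (hD1 : D * A ^ (k + 1) = A ^ k) (hD2 : D * A * D = D) (hD3 : A * D = D * A) :
    ((M * A * D) * A * (M * A * D) = M * A * D ∧
      (M * A * D) * A = M * A * D * A ∧
      A * (M * A * D) = A * D) ∧
    ∀ Z : Matrix (Fin n) (Fin n) ℂ,
      (Z * A * Z = Z ∧ Z * A = M * A * D * A ∧ A * Z = A * D) → Z = M * A * D := by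
  have hAD : A * (M * A * D) = A * D := by
    calc A * (M * A * D) = A * M * A * D := by noncomm_ring
    _ = A * D := by rw [hM1]
  have h1 : (M * A * D) * A * (M * A * D) = M * A * D := by
    calc (M * A * D) * A * (M * A * D) = M * A * D * (A * (M * A * D)) := by noncomm_ring
    _ = M * A * D * (A * D) := by rw [hAD]
    _ = M * A * (D * A * D) := by noncomm_ring
    _ = M * A * D := by rw [hD2]
  refine ⟨⟨h1, rfl, hAD⟩, fun Z ⟨hZ1, hZ2, hZ3⟩ => ?_⟩
  calc Z = Z * A * Z := hZ1.symm
  _ = M * A * D * A * Z := by rw [hZ2]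
  _ = M * A * D * (A * Z) := by noncomm_ring
  _ = M * A * D * (A * D) := by rw [hZ3]
  _ = M * A * (D * A * D) := by noncomm_ring
  _ = M * A * D := by rw [hD2]
end

section
/- Let A be a square complex matrix with Moore-Penrose inverse M and Drazin inverse D of index k, and define the DMP inverse A^{D,†} = D*A*M. Then the CMP inverse M*A*A^{D,†} = M*A*D*A*M is the unique matrix Z satisfying: Z*A*Z = Z, A*Z = A*D*A*M, and Z*A = M*A*D*A. -/
open Matrix

theorem stmt_11 {n : ℕ} (A M D : Matrix (Fin n) (Fin n) ℂ) (k : ℕ) (hk : 0 < k)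
    (hM1 : A * M * A = A) (hM2 : M * A * M = M)
    (hM3 : (A * M)ᴴ = A * M) (hM4 : (M * A)ᴴ = M * A)
    (hD1 : D * A ^ (k + 1) = A ^ k) (hD2 : D * A * D = D) (hD3 : A * D = D * A) :
    ((M * A * D * A * M) * A * (M * A * D * A * M) = M * A * D * A * M ∧
      A * (M * A * D * A * M) = A * D * A * M ∧
      (M * A * D * A * M) * A = M * A * D * A) ∧
    ∀ Z : Matrix (Fin n) (Fin n) ℂ,
      (Z * A * Z = Z ∧ A * Z = A * D * A * M ∧ Z * A = M * A * D * A) →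
        Z = M * A * D * A * M := by
  have hM1' : A * (M * A) = A := by rw [← mul_assoc]; exact hM1
  have haux1 : ∀ X : Matrix (Fin n) (Fin n) ℂ, A * (M * (A * X)) = A * X := by
    intro X; rw [← mul_assoc, ← mul_assoc, hM1]
  have haux2 : ∀ X : Matrix (Fin n) (Fin n) ℂ, D * (A * (D * X)) = D * X := by
    intro X; rw [← mul_assoc, ← mul_assoc, hD2]
  refine ⟨⟨?_, ?_, ?_⟩, ?_⟩
  · simp only [mul_assoc]
    rw [haux1, haux1, haux2]
  · simp only [mul_assoc]
    rw [haux1]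
  · simp only [mul_assoc]
    rw [hM1']
  · rintro Z ⟨h1, h2, h3⟩
    calc Z = Z * A * Z := h1.symm
      _ = Z * (A * Z) := by rw [mul_assoc]
      _ = Z * (A * D * A * M) := by rw [h2]
      _ = Z * A * (D * A * M) := by simp only [mul_assoc]
      _ = M * A * D * A * (D * A * M) := by rw [h3]
      _ = M * A * D * A * M := by
          simp only [mul_assoc]; rw [haux2]
end

section
/- Let A be a square complex matrix with Moore-Penrose inverse M and core-EP inverse C of index k. The MPCEP inverse M*A*C is the unique matrix Z satisfying the three equations: Z*A*Z = Z, A*Z = A*C, and Z*A = M*A*C*A. -/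
open Matrix

theorem stmt_12 {n : ℕ} (A M C : Matrix (Fin n) (Fin n) ℂ) (k : ℕ) (hk : 0 < k)
    (hM1 : A * M * A = A) (hM2 : M * A * M = M)
    (hM3 : (A * M)ᴴ = A * M) (hM4 : (M * A)ᴴ = M * A)
    (hC1 : C * A ^ (k + 1) = A ^ k) (hC2 : A * C ^ 2 = C) (hC3 : (A * C)ᴴ = A * C) :
    ((M * A * C) * A * (M * A * C) = M * A * C ∧
      A * (M * A * C) = A * C ∧
      (M * A * C) * A = M * A * C * A) ∧
    ∀ Z : Matrix (Fin n) (Fin n) ℂ,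
      (Z * A * Z = Z ∧ A * Z = A * C ∧ Z * A = M * A * C * A) → Z = M * A * C := by
  obtain ⟨m, rfl⟩ : ∃ m, k = m + 1 := ⟨k - 1, (Nat.succ_pred_eq_of_pos hk).symm⟩
  have key : ∀ j : ℕ, A ^ (j + 1) * C ^ (j + 2) = C := by
    intro j
    induction j with
    | zero => simpa using hC2
    | succ i ih =>
      have hc : C ^ (i + 1 + 2) = C ^ 2 * C ^ (i + 1) := by
        rw [show i + 1 + 2 = 2 + (i + 1) by omega, pow_add]
      calc A ^ (i + 1 + 1) * C ^ (i + 1 + 2)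
          = A ^ (i + 1) * A * (C ^ 2 * C ^ (i + 1)) := by rw [pow_succ, hc]
        _ = A ^ (i + 1) * (A * C ^ 2) * C ^ (i + 1) := by
            simp only [mul_assoc]
        _ = A ^ (i + 1) * (C * C ^ (i + 1)) := by rw [hC2, mul_assoc]
        _ = A ^ (i + 1) * C ^ (i + 2) := by rw [← pow_succ']
        _ = C := ih
  have hCk : A ^ (m + 1) * C ^ (m + 2) = C := key m
  have hCAC : C * A * C = C := by
    calc C * A * C = C * A * (A ^ (m + 1) * C ^ (m + 2)) := by rw [hCk]
      _ = C * (A * A ^ (m + 1)) * C ^ (m + 2) := by simp only [mul_assoc]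
      _ = C * A ^ (m + 1 + 1) * C ^ (m + 2) := by rw [← pow_succ']
      _ = A ^ (m + 1) * C ^ (m + 2) := by rw [hC1]
      _ = C := hCk
  have hAMAC : A * (M * A * C) = A * C := by
    calc A * (M * A * C) = A * M * A * C := by simp only [mul_assoc]
      _ = A * C := by rw [hM1]
  have hMAC : (M * A * C) * A * (M * A * C) = M * A * C := by
    calc (M * A * C) * A * (M * A * C) = (M * A * C) * (A * (M * A * C)) := by
          simp only [mul_assoc]
      _ = (M * A * C) * (A * C) := by rw [hAMAC]
      _ = M * A * (C * A * C) := by simp only [mul_assoc]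
      _ = M * A * C := by rw [hCAC]
  refine ⟨⟨hMAC, hAMAC, rfl⟩, ?_⟩
  rintro Z ⟨hZ1, hZ2, hZ3⟩
  calc Z = Z * A * Z := hZ1.symm
    _ = M * A * C * A * Z := by rw [hZ3]
    _ = M * A * C * (A * Z) := by simp only [mul_assoc]
    _ = M * A * C * (A * C) := by rw [hZ2]
    _ = M * A * (C * A * C) := by simp only [mul_assoc]
    _ = M * A * C := by rw [hCAC]
end

section
/- Let A be a square complex matrix with Moore-Penrose inverse M and core-EP inverse C of index k. The CEPMP inverse C*A*M is the unique matrix Z satisfying the three equations: Z*A*Z = Z, A*Z = A*C*A*M, and Z*A = C*A. -/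
open Matrix

theorem stmt_13 {n : ℕ} (A M C : Matrix (Fin n) (Fin n) ℂ) (k : ℕ) (hk : 0 < k)
    (hM1 : A * M * A = A) (hM2 : M * A * M = M)
    (hM3 : (A * M)ᴴ = A * M) (hM4 : (M * A)ᴴ = M * A)
    (hC1 : C * A ^ (k + 1) = A ^ k) (hC2 : A * C ^ 2 = C) (hC3 : (A * C)ᴴ = A * C) :
    ((C * A * M) * A * (C * A * M) = C * A * M ∧
      A * (C * A * M) = A * C * A * M ∧
      (C * A * M) * A = C * A) ∧
    ∀ Z : Matrix (Fin n) (Fin n) ℂ,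
      (Z * A * Z = Z ∧ A * Z = A * C * A * M ∧ Z * A = C * A) → Z = C * A * M := by
  have hpow : ∀ m : ℕ, A ^ m * C ^ (m + 1) = C := by
    intro m
    induction m with
    | zero => simp
    | succ m ih =>
        have h1 : A * C ^ (m + 2) = C ^ (m + 1) := by
          have : A * C ^ (m + 2) = (A * C ^ 2) * C ^ m := by
            rw [mul_assoc, ← pow_add, add_comm]
          rw [this, hC2, ← pow_succ']
        calc A ^ (m + 1) * C ^ (m + 2) = A ^ m * (A * C ^ (m + 2)) := by
              rw [← mul_assoc, ← pow_succ]
          _ = A ^ m * C ^ (m + 1) := by rw [h1]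
          _ = C := ih
  have hCAC : C * A * C = C := by
    calc C * A * C = C * A * (A ^ k * C ^ (k + 1)) := by rw [hpow k]
      _ = (C * A ^ (k + 1)) * C ^ (k + 1) := by
          rw [mul_assoc, ← mul_assoc A, ← pow_succ', mul_assoc]
      _ = A ^ k * C ^ (k + 1) := by rw [hC1]
      _ = C := hpow k
  have h3 : (C * A * M) * A = C * A := by
    rw [mul_assoc, mul_assoc, ← mul_assoc A, hM1]
  refine ⟨⟨?_, by simp [mul_assoc], h3⟩, ?_⟩
  · have : (C * A * M) * A * (C * A * M) = (C * A) * (C * A * M) := by rw [h3]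
    rw [this]
    have h4 : (C * A) * (C * A * M) = (C * A * C) * (A * M) := by
      simp [mul_assoc]
    rw [h4, hCAC, mul_assoc]
  · rintro Z ⟨hZ1, hZ2, hZ3⟩
    calc Z = Z * A * Z := hZ1.symm
      _ = Z * (A * Z) := by rw [mul_assoc]
      _ = Z * (A * C * A * M) := by rw [hZ2]
      _ = (Z * A) * (C * A * M) := by simp [mul_assoc]
      _ = (C * A) * (C * A * M) := by rw [hZ3]
      _ = (C * A * C) * (A * M) := by simp [mul_assoc]
      _ = C * (A * M) := by rw [hCAC]
      _ = C * A * M := by rw [mul_assoc]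
end

section
/- Let A be a square complex matrix with Moore-Penrose inverse M, Drazin inverse D of index k, DMP inverse A^{D,†} = D*A*M, MPD inverse A^{†,D} = M*A*D, and CMP inverse A^{c,†} = M*A*D*A*M. Then A^{c,†} = A^{†,D} if and only if the null space of M is contained in the null space of A^k (equivalently, every vector v with M*v = 0 satisfies A^k*v = 0). -/
set_option maxHeartbeats 1000000

open Matrix

private lemma aux_eq_zero {n : ℕ} (X : Matrix (Fin n) (Fin n) ℂ)
    (h : ∀ v : Fin n → ℂ, X.mulVec v = 0) : X = 0 := by
  ext i j
  have := congrFun (h (Pi.single j 1)) i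
  simpa [Matrix.mulVec_single] using this

theorem stmt_14 {n : ℕ} (A M D : Matrix (Fin n) (Fin n) ℂ) (k : ℕ) (hk : 0 < k)
    (hM1 : A * M * A = A) (hM2 : M * A * M = M)
    (hM3 : (A * M)ᴴ = A * M) (hM4 : (M * A)ᴴ = M * A)
    (hD1 : D * A ^ (k + 1) = A ^ k) (hD2 : D * A * D = D) (hD3 : A * D = D * A) :
    M * A * D * A * M = M * A * D ↔
      ∀ v : Fin n → ℂ, M.mulVec v = 0 → (A ^ k).mulVec v = 0 := by
  have hcomm : Commute D A := hD3.symm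
  -- idempotent powers of D*A
  have hDA : (D * A) * (D * A) = D * A := by
    calc (D * A) * (D * A) = (D * A * D) * A := by noncomm_ring
    _ = D * A := by rw [hD2]
  have hpow : ∀ m : ℕ, (D * A) ^ (m + 1) = D * A := by
    intro m
    induction m with
    | zero => simp
    | succ m ih => rw [pow_succ, ih, hDA]
  constructor
  · intro h v hv
    have h1 : A * D * A * M = A * D := by
      have := congrArg (fun X => A * X) h
      simp only [← mul_assoc] at this
      rwa [hM1] at this
    have hAk : A ^ k = A ^ k * A * D * A * M := by
      calc A ^ k = D * A ^ (k + 1) := hD1.symm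
      _ = A ^ (k + 1) * D := (hcomm.pow_right (k + 1)).eq
      _ = A ^ k * (A * D) := by rw [pow_succ, mul_assoc]
      _ = A ^ k * (A * D * A * M) := by rw [h1]
      _ = A ^ k * A * D * A * M := by noncomm_ring
    rw [hAk, show A ^ k * A * D * A * M = (A ^ k * A * D * A) * M by noncomm_ring,
      ← Matrix.mulVec_mulVec, hv, Matrix.mulVec_zero]
  · intro h
    -- A^k = A^k * A * M
    have hAkAM : A ^ k = A ^ k * A * M := by
      have hz : A ^ k * (1 - A * M) = 0 := by
        apply aux_eq_zero
        intro v
        rw [← Matrix.mulVec_mulVec]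
        apply h
        rw [Matrix.mulVec_mulVec]
        have : M * (1 - A * M) = 0 := by
          rw [mul_sub, mul_one, ← mul_assoc, hM2, sub_self]
        rw [this, Matrix.zero_mulVec]
      rw [mul_sub, mul_one, sub_eq_zero, ← mul_assoc] at hz
      exact hz
    have hDDA : ∀ m : ℕ, D * (A * D) ^ m = D := by
      intro m
      induction m with
      | zero => simp
      | succ m ih => rw [pow_succ, ← mul_assoc, ih, ← mul_assoc, hD2]
    have hDAM : D = D * A * M := by
      calc D = D * (A * D) ^ k := (hDDA k).symm
      _ = D ^ (k + 1) * A ^ k := by rw [hD3, hcomm.mul_pow, ← mul_assoc, ← pow_succ']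
      _ = D ^ (k + 1) * (A ^ k * A * M) := by rw [← hAkAM]
      _ = D ^ (k + 1) * A ^ (k + 1) * M := by rw [pow_succ A k]; simp only [mul_assoc]
      _ = (D * A) ^ (k + 1) * M := by rw [hcomm.mul_pow]
      _ = D * A * M := by rw [hpow]
    calc M * A * D * A * M = M * A * (D * A * M) := by simp only [mul_assoc]
    _ = M * A * D := by rw [← hDAM]
end

section
/- Let A be a square complex matrix with Moore-Penrose inverse M, Drazin inverse D of index k, DMP inverse A^{D,†} = D*A*M, and CMP inverse A^{c,†} = M*A*D*A*M. Then A^{c,†} = A^{D,†} if and only if the column space of A^k is contained in the column space of M (equivalently, there exists a matrix T with A^k = M*T). -/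
open Matrix

theorem stmt_15 {n : ℕ} (A M D : Matrix (Fin n) (Fin n) ℂ) (k : ℕ) (hk : 0 < k)
    (hM1 : A * M * A = A) (hM2 : M * A * M = M)
    (hM3 : (A * M)ᴴ = A * M) (hM4 : (M * A)ᴴ = M * A)
    (hD1 : D * A ^ (k + 1) = A ^ k) (hD2 : D * A * D = D) (hD3 : A * D = D * A) :
    M * A * D * A * M = D * A * M ↔
      ∃ T : Matrix (Fin n) (Fin n) ℂ, A ^ k = M * T := by
  have hcomm : Commute A D := hD3
  constructor
  · intro h
    refine ⟨A * D * A * M * (A * A ^ k), ?_⟩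
    have h1 : A ^ k = D * A * A ^ k := by
      rw [mul_assoc, ← pow_succ', hD1]
    calc A ^ k = D * A * A ^ k := h1
      _ = D * (A * M * A) * A ^ k := by rw [hM1]
      _ = D * A * M * (A * A ^ k) := by simp only [mul_assoc]
      _ = M * A * D * A * M * (A * A ^ k) := by rw [h]
      _ = M * (A * D * A * M * (A * A ^ k)) := by simp only [mul_assoc]
  · rintro ⟨T, hT⟩
    have key : ∀ m : ℕ, D ^ (m + 1) * A ^ m = D := by
      intro m
      induction m with
      | zero => simp
      | succ m ih =>
        calc D ^ (m + 2) * A ^ (m + 1)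
            = D * (D ^ (m + 1) * A ^ m) * A := by
              rw [pow_succ A m, pow_succ' D (m + 1)]
              simp only [mul_assoc]
          _ = D * D * A := by rw [ih]
          _ = D * (A * D) := by rw [mul_assoc, ← hD3]
          _ = D := by rw [← mul_assoc, hD2]
    have hD' : D = M * (T * D ^ (k + 1)) := by
      calc D = D ^ (k + 1) * A ^ k := (key k).symm
        _ = A ^ k * D ^ (k + 1) := (hcomm.pow_pow k (k + 1)).symm
        _ = M * T * D ^ (k + 1) := by rw [hT]
        _ = M * (T * D ^ (k + 1)) := by rw [mul_assoc]
    have e1 : M * A * D * A * M = M * A * (M * (T * D ^ (k + 1))) * A * M := by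
      rw [← hD']
    have e2 : M * A * (M * (T * D ^ (k + 1))) * A * M
        = M * (T * D ^ (k + 1)) * A * M := by
      rw [← mul_assoc, hM2]
    have e3 : M * (T * D ^ (k + 1)) * A * M = D * A * M := by rw [← hD']
    rw [e1, e2, e3]
end

section
/- Let A be a square complex matrix with Moore-Penrose inverse M, Drazin inverse D of index k, and core-EP inverse C satisfying C = D*A^l*(A^l)^† for l ≥ k, where (A^l)^† is the Moore-Penrose inverse of A^l. Then the MPCEP inverse satisfies M*A*C = M*A^l*(A^l)^† and the CEPMP inverse satisfies C*A*M = D*A^l*(A^l)^†. -/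
open Matrix

theorem stmt_16 {n : ℕ} (A M D C N : Matrix (Fin n) (Fin n) ℂ) (k l : ℕ)
    (hk : 0 < k) (hl : k ≤ l)
    (hM1 : A * M * A = A) (hM2 : M * A * M = M)
    (hM3 : (A * M)ᴴ = A * M) (hM4 : (M * A)ᴴ = M * A)
    (hN1 : A ^ l * N * A ^ l = A ^ l) (hN2 : N * A ^ l * N = N)
    (hN3 : (A ^ l * N)ᴴ = A ^ l * N) (hN4 : (N * A ^ l)ᴴ = N * A ^ l)
    (hD1 : D * A ^ (k + 1) = A ^ k) (hD2 : D * A * D = D) (hD3 : A * D = D * A)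
    (hC : C = D * A ^ l * N) :
    M * A * C = M * A ^ l * N ∧ C * A * M = D * A ^ l * N := by
  obtain ⟨m, rfl⟩ := Nat.exists_eq_add_of_le hl
  -- D * A^(l+1) = A^l
  have hDl : D * A ^ (k + m + 1) = A ^ (k + m) := by
    have : A ^ (k + m + 1) = A ^ (k + 1) * A ^ m := by
      rw [← pow_add]; ring_nf
    rw [this, ← Matrix.mul_assoc, hD1, ← pow_add]
  -- A * D * A^l = A^l
  have hADl : A * D * A ^ (k + m) = A ^ (k + m) := by
    rw [hD3, Matrix.mul_assoc, ← pow_succ', hDl]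
  -- Aᴴ * (A * M) = Aᴴ
  have h1 : Aᴴ * (A * M) = Aᴴ := by
    have := congrArg conjTranspose hM1
    rwa [conjTranspose_mul, hM3] at this
  -- A^l * N * A * M = A^l * N
  have h2 : A ^ (k + m) * N * A * M = A ^ (k + m) * N := by
    obtain ⟨j, hj⟩ : ∃ j, k + m = j + 1 :=
      ⟨k + m - 1, by omega⟩
    have key : (Aᴴ) ^ (k + m) * A * M = (Aᴴ) ^ (k + m) := by
      rw [hj, pow_succ, Matrix.mul_assoc, Matrix.mul_assoc, h1]
    calc A ^ (k + m) * N * A * M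
        = (A ^ (k + m) * N)ᴴ * A * M := by rw [hN3]
      _ = Nᴴ * ((Aᴴ) ^ (k + m) * A * M) := by
          simp [Matrix.mul_assoc]
      _ = Nᴴ * (Aᴴ) ^ (k + m) := by rw [key]
      _ = (A ^ (k + m) * N)ᴴ := by rw [conjTranspose_mul, conjTranspose_pow]
      _ = A ^ (k + m) * N := hN3
  constructor
  · rw [hC, show M * A * (D * A ^ (k + m) * N) = M * (A * D * A ^ (k + m)) * N from by
      simp [Matrix.mul_assoc], hADl]
  · rw [hC, show D * A ^ (k + m) * N * A * M = D * (A ^ (k + m) * N * A * M) from by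
      simp [Matrix.mul_assoc], h2, ← Matrix.mul_assoc]
end

section
/- Let A be a square complex matrix with Moore-Penrose inverse M, Drazin inverse D of index k, and CMP inverse A^{c,†} = M*A*D*A*M. For any vector b, the solution set of the linear system A^k * z = A^k * M * b equals the set { A^{c,†}*b + (I − A^{c,†}*A)*q : q an arbitrary vector }. -/
open Matrix

theorem stmt_17 {n : ℕ} (A M D : Matrix (Fin n) (Fin n) ℂ) (k : ℕ) (hk : 0 < k)
    (hM1 : A * M * A = A) (hM2 : M * A * M = M)
    (hM3 : (A * M)ᴴ = A * M) (hM4 : (M * A)ᴴ = M * A)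
    (hD1 : D * A ^ (k + 1) = A ^ k) (hD2 : D * A * D = D) (hD3 : A * D = D * A)
    (b : Fin n → ℂ) :
    {z : Fin n → ℂ | (A ^ k).mulVec z = (A ^ k).mulVec (M.mulVec b)} =
      {z : Fin n → ℂ | ∃ q : Fin n → ℂ,
        z = (M * A * D * A * M).mulVec b + (1 - M * A * D * A * M * A).mulVec q} := by
  set C := M * A * D * A * M with hC
  have hc : Commute A D := hD3
  -- A^k * M * A = A^k
  obtain ⟨m, rfl⟩ : ∃ m, k = m + 1 := ⟨k - 1, (Nat.succ_pred_eq_of_pos hk).symm⟩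
  set k := m + 1
  have hAkMA : A ^ k * M * A = A ^ k := by
    rw [pow_succ, mul_assoc (A ^ m) A M, mul_assoc (A ^ m) (A * M) A, hM1]
  have hAkDA : A ^ k * D * A = A ^ k := by
    rw [(hc.pow_left k).eq, mul_assoc, ← pow_succ, hD1]
  have e1 : A ^ k * C = A ^ k * M := by
    rw [hC]
    simp only [← mul_assoc]
    rw [hAkMA, hAkDA]
  have e2 : A ^ k * (1 - C * A) = 0 := by
    rw [mul_sub, mul_one, ← mul_assoc, e1, hAkMA, sub_self]
  -- D = A^k * D^(k+1)
  have haux : ∀ j, D * (A * D) ^ j = D := by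
    intro j
    induction j with
    | zero => simp
    | succ i ih => rw [pow_succ, ← mul_assoc, ih, ← mul_assoc, hD2]
  have hDk : D = A ^ k * D ^ (k + 1) := by
    calc D = D * (A * D) ^ k := (haux k).symm
      _ = D * (A ^ k * D ^ k) := by rw [hc.mul_pow]
      _ = D * A ^ k * D ^ k := by rw [mul_assoc]
      _ = A ^ k * D * D ^ k := by rw [← (hc.pow_left k).eq]
      _ = A ^ k * D ^ (k + 1) := by rw [mul_assoc, ← pow_succ']
  set E := M * A * D ^ (k + 1) * A with hE
  have I0 : M * A * D * A = E * A ^ k := by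
    conv_lhs => rw [hDk]
    rw [hE]
    rw [mul_assoc (M * A), (hc.pow_pow k (k+1)).eq]
    simp only [← mul_assoc]
    rw [mul_assoc (M * A * D ^ (k + 1)) (A ^ k) A, ← pow_succ, pow_succ' A k,
      ← mul_assoc]
  have I1 : C * A = E * A ^ k := by
    rw [hC, mul_assoc (M * A * D) A M, mul_assoc (M * A * D) (A * M) A,
      hM1, I0]
  have I2 : E * A ^ k * M = C := by rw [← I0, ← hC]
  ext z
  simp only [Set.mem_setOf_eq]
  constructor
  · intro hz
    refine ⟨z, ?_⟩
    have key : (C * A).mulVec z = C.mulVec b := by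
      rw [I1, ← mulVec_mulVec, hz, mulVec_mulVec, mulVec_mulVec, I2]
    rw [sub_mulVec, one_mulVec, key]
    abel
  · rintro ⟨q, rfl⟩
    rw [mulVec_add, mulVec_mulVec, mulVec_mulVec, e2, zero_mulVec, add_zero,
      e1, ← mulVec_mulVec]
end

section
/- Let A be a square complex matrix with Moore-Penrose inverse M, Drazin inverse D of index k, and DMP inverse A^{D,†} = D*A*M. If b is a vector in the column space of A^k (i.e., b = A^k * u for some vector u), then z = A^{D,†}*b satisfies A*z = b, and it is the unique such solution lying in the column space of D*A^k. -/
open Matrix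

theorem stmt_18 {n : ℕ} (A M D : Matrix (Fin n) (Fin n) ℂ) (k : ℕ) (hk : 0 < k)
    (hM1 : A * M * A = A) (hM2 : M * A * M = M)
    (hM3 : (A * M)ᴴ = A * M) (hM4 : (M * A)ᴴ = M * A)
    (hD1 : D * A ^ (k + 1) = A ^ k) (hD2 : D * A * D = D) (hD3 : A * D = D * A)
    (b : Fin n → ℂ) (hb : ∃ u : Fin n → ℂ, b = (A ^ k).mulVec u) :
    (A.mulVec ((D * A * M).mulVec b) = b ∧
      ∃ w : Fin n → ℂ, (D * A * M).mulVec b = (D * A ^ k).mulVec w) ∧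
    ∀ z1 z2 : Fin n → ℂ,
      (∃ w : Fin n → ℂ, z1 = (D * A ^ k).mulVec w) →
      (∃ w : Fin n → ℂ, z2 = (D * A ^ k).mulVec w) →
      A.mulVec z1 = b → A.mulVec z2 = b → z1 = z2 := by
  obtain ⟨u, rfl⟩ := hb
  obtain ⟨k, rfl⟩ : ∃ m, k = m + 1 := ⟨k - 1, (Nat.succ_pred_eq_of_pos hk).symm⟩
  have hAMAk : A * M * A ^ (k + 1) = A ^ (k + 1) := by
    rw [pow_succ', ← mul_assoc, hM1]
  have key1 : A * (D * A * M) * A ^ (k + 1) = A ^ (k + 1) := by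
    calc A * (D * A * M) * A ^ (k + 1)
        = A * D * (A * M * A ^ (k + 1)) := by simp only [mul_assoc]
      _ = A * D * A ^ (k + 1) := by rw [hAMAk]
      _ = D * (A * A ^ (k + 1)) := by rw [hD3, mul_assoc]
      _ = A ^ (k + 1) := by rw [← pow_succ', hD1]
  have key2 : (D * A * M) * A ^ (k + 1) = D * A ^ (k + 1) := by
    calc (D * A * M) * A ^ (k + 1)
        = D * (A * M * A ^ (k + 1)) := by simp only [mul_assoc]
      _ = D * A ^ (k + 1) := by rw [hAMAk]
  have key3 : (D * A) * (D * A ^ (k + 1)) = D * A ^ (k + 1) := by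
    calc (D * A) * (D * A ^ (k + 1))
        = (D * A * D) * A ^ (k + 1) := by simp only [mul_assoc]
      _ = D * A ^ (k + 1) := by rw [hD2]
  have fix : ∀ z : Fin n → ℂ, (∃ w : Fin n → ℂ, z = (D * A ^ (k + 1)).mulVec w) →
      D.mulVec (A.mulVec z) = z := by
    rintro z ⟨w, rfl⟩
    rw [mulVec_mulVec, mulVec_mulVec, ← mul_assoc, hD2]
  refine ⟨⟨?_, ⟨u, ?_⟩⟩, ?_⟩
  · rw [mulVec_mulVec, mulVec_mulVec, key1]
  · rw [mulVec_mulVec, key2]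
  · rintro z1 z2 h1 h2 e1 e2
    rw [← fix z1 h1, ← fix z2 h2, e1, e2]
end

section
/- Let A be a square complex matrix with Moore-Penrose inverse M and core-EP inverse C of index k, and let (A^k)^† be the Moore-Penrose inverse of A^k. For any vector b, the solution set of the linear system A * z = A^k * (A^k)^† * b equals the set { M*A*C*b + (I − M*A)*q : q an arbitrary vector }. -/
open Matrix

theorem stmt_19 {n : ℕ} (A M C D N : Matrix (Fin n) (Fin n) ℂ) (k : ℕ) (hk : 0 < k)
    (hM1 : A * M * A = A) (hM2 : M * A * M = M)
    (hM3 : (A * M)ᴴ = A * M) (hM4 : (M * A)ᴴ = M * A)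
    (hN1 : A ^ k * N * A ^ k = A ^ k) (hN2 : N * A ^ k * N = N)
    (hN3 : (A ^ k * N)ᴴ = A ^ k * N) (hN4 : (N * A ^ k)ᴴ = N * A ^ k)
    (hC1 : C * A ^ (k + 1) = A ^ k) (hC2 : A * C ^ 2 = C) (hC3 : (A * C)ᴴ = A * C)
    (hD1 : D * A ^ (k + 1) = A ^ k) (hD2 : D * A * D = D) (hD3 : A * D = D * A)
    (hC : C = D * A ^ k * N)
    (b : Fin n → ℂ) :
    {z : Fin n → ℂ | A.mulVec z = (A ^ k * N).mulVec b} =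
      {z : Fin n → ℂ | ∃ q : Fin n → ℂ,
        z = (M * A * C).mulVec b + (1 - M * A).mulVec q} := by
  have hADk : A * D * A ^ k = A ^ k := by
    rw [hD3, mul_assoc, ← pow_succ']; exact hD1
  have hAC : A * C = A ^ k * N := by
    rw [hC, ← mul_assoc, ← mul_assoc, hADk]
  ext z
  simp only [Set.mem_setOf_eq]
  constructor
  · intro hz
    refine ⟨z, ?_⟩
    have h1 : (M * A * C).mulVec b = (M * A).mulVec z := by
      rw [mul_assoc, ← Matrix.mulVec_mulVec, hAC, ← hz, Matrix.mulVec_mulVec]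
    rw [h1, Matrix.sub_mulVec, Matrix.one_mulVec]
    abel
  · rintro ⟨q, rfl⟩
    rw [Matrix.mulVec_add, Matrix.mulVec_mulVec, Matrix.mulVec_mulVec,
      ← mul_assoc, ← mul_assoc, hM1, hAC, mul_sub, mul_one, ← mul_assoc, hM1,
      sub_self, Matrix.zero_mulVec, add_zero]
end
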